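/- arXiv:math/0411275 — 3 statements merged into one kernel-verified Lean document; each statement's English description precedes it below -/
import Mathlib

section
/- There exists a solution of the N-peg puzzle using exactly N² + 2N moves; hence the minimum number of moves needed is exactly N² + 2N. -/
/-- A cell of the puzzle: a blue peg, a red peg, or an empty hole. -/
inductive Cell
  | B : Cell
  | R : Cell
  | O : Cell
  deriving DecidableEq

open Cell

/-- A step: a peg (of either color) moves into the adjacent empty hole. -/
def StepMove (c d : List Cell) : Prop :=
  ∃ x y p, p ≠ O ∧
    ((c = x ++ p :: O :: y ∧ d = x ++ O :: p :: y) ∨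
     (c = x ++ O :: p :: y ∧ d = x ++ p :: O :: y))

/-- A jump: a peg jumps over a single adjacent peg into the empty hole. -/
def JumpMove (c d : List Cell) : Prop :=
  ∃ x y p q, p ≠ O ∧ q ≠ O ∧
    ((c = x ++ p :: q :: O :: y ∧ d = x ++ O :: q :: p :: y) ∨
     (c = x ++ O :: q :: p :: y ∧ d = x ++ p :: q :: O :: y))

/-- A legal move of the puzzle: a step or a jump. -/
def PegMove (c d : List Cell) : Prop := StepMove c d ∨ JumpMove c d

/-- Initial configuration `BᴺORᴺ`. -/
def startCfg (N : ℕ) : List Cell := List.replicate N B ++ O :: List.replicate N R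

/-- Final configuration `RᴺOBᴺ`. -/
def finishCfg (N : ℕ) : List Cell := List.replicate N R ++ O :: List.replicate N B

/-- `IsSolution N L f` : `f 0, f 1, …, f L` is a sequence of configurations
beginning at `BᴺORᴺ`, ending at `RᴺOBᴺ`, each obtained from the previous one
by a legal move; it uses `L` moves. -/
def IsSolution (N L : ℕ) (f : ℕ → List Cell) : Prop :=
  f 0 = startCfg N ∧ f L = finishCfg N ∧ ∀ t < L, PegMove (f t) (f (t + 1))

/-!
In a row `X O (RB)ᵏ Y` with monochromatic outer blocks `X`, `Y`, a step followed by `k + 1` jumps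
sweeps the hole across the alternating block and produces the mirror image (row reversed, colours
swapped) of such a row whose block is one pair longer; in the same way the block can be shrunk
again. Growing it from `0` to `N` pairs costs `N + N(N+1)/2` moves and shrinking it back
`N + N(N-1)/2`, which is `N² + 2N` in all.

For the lower bound let `w` be the row with the hole removed and `k` the position of the hole.
The quantity `inversions w + 2 · #(blue pegs among the first N entries of w)` is `N² + 2N` at the
start and `0` at the end. Steps do not change it, and a jump changes it by at most one unless it
exchanges `w[N-1]` and `w[N]`, when it can change by three. The correction `middleCrossing`,
switched on only when `k + N` is odd, repairs this: it changes by at most one on a step, a jump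
keeps the parity of `k` and is made with the correction switched off when it moves just one of
`w[N-1]`, `w[N]`, and on the middle jump it changes by two in the opposite direction.
-/

open SimpleGraph List

lemma PegMove.symm {c d : List Cell} : PegMove c d → PegMove d c := by
  rintro (⟨x, y, p, hp, h | h⟩ | ⟨x, y, p, q, hp, hq, h | h⟩)
  exacts [.inl ⟨x, y, p, hp, .inr h.symm⟩, .inl ⟨x, y, p, hp, .inl h.symm⟩,
    .inr ⟨x, y, p, q, hp, hq, .inr h.symm⟩, .inr ⟨x, y, p, q, hp, hq, .inl h.symm⟩]

lemma PegMove.ne {c d : List Cell} : PegMove c d → c ≠ d := by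
  rintro (⟨x, y, p, hp, ⟨rfl, rfl⟩ | ⟨rfl, rfl⟩⟩ |
      ⟨x, y, p, q, hp, hq, ⟨rfl, rfl⟩ | ⟨rfl, rfl⟩⟩) <;>
    simp [hp, hp.symm]

lemma PegMove.count_eq (a : Cell) {c d : List Cell} (h : PegMove c d) :
    d.count a = c.count a := by
  rcases h with ⟨x, y, p, -, ⟨rfl, rfl⟩ | ⟨rfl, rfl⟩⟩ |
      ⟨x, y, p, q, -, -, ⟨rfl, rfl⟩ | ⟨rfl, rfl⟩⟩ <;>
    simp only [count_append, count_cons] <;> omega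

def pegGraph : SimpleGraph (List Cell) where
  Adj := PegMove
  symm := ⟨fun _ _ => PegMove.symm⟩
  loopless := ⟨fun _ h => h.ne rfl⟩

lemma pegGraph_adj_step_right (x y : List Cell) {p : Cell} (hp : p ≠ O) :
    pegGraph.Adj (x ++ p :: O :: y) (x ++ O :: p :: y) :=
  .inl ⟨x, y, p, hp, .inl ⟨rfl, rfl⟩⟩

lemma pegGraph_adj_step_left (x y : List Cell) {p : Cell} (hp : p ≠ O) :
    pegGraph.Adj (x ++ O :: p :: y) (x ++ p :: O :: y) :=
  .inl ⟨x, y, p, hp, .inr ⟨rfl, rfl⟩⟩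

lemma pegGraph_adj_jump_left (x y : List Cell) {p q : Cell} (hp : p ≠ O) (hq : q ≠ O) :
    pegGraph.Adj (x ++ O :: q :: p :: y) (x ++ p :: q :: O :: y) :=
  .inr ⟨x, y, p, q, hp, hq, .inr ⟨rfl, rfl⟩⟩

def Cell.swap : Cell → Cell
  | B => R
  | R => B
  | O => O

@[simp] lemma Cell.swap_eq_O {p : Cell} : p.swap = O ↔ p = O := by
  cases p <;> simp [Cell.swap]

def mirror (c : List Cell) : List Cell := (c.map Cell.swap).reverse

@[simp] lemma mirror_append (c d : List Cell) : mirror (c ++ d) = mirror d ++ mirror c := by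
  simp [mirror]

@[simp] lemma mirror_cons (p : Cell) (c : List Cell) :
    mirror (p :: c) = mirror c ++ [p.swap] := by
  simp [mirror]

@[simp] lemma mirror_replicate (n : ℕ) (p : Cell) :
    mirror (replicate n p) = replicate n p.swap := by
  simp [mirror]

lemma mirror_finishCfg (n : ℕ) : mirror (finishCfg n) = finishCfg n := by
  simp [finishCfg, Cell.swap]

lemma PegMove.mirror {c d : List Cell} : PegMove c d → PegMove (mirror c) (mirror d) := by
  rintro (⟨x, y, p, hp, ⟨rfl, rfl⟩ | ⟨rfl, rfl⟩⟩ |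
      ⟨x, y, p, q, hp, hq, ⟨rfl, rfl⟩ | ⟨rfl, rfl⟩⟩)
  · exact .inl ⟨_root_.mirror y, _root_.mirror x, p.swap, by simpa,
      .inr ⟨by simp, by simp⟩⟩
  · exact .inl ⟨_root_.mirror y, _root_.mirror x, p.swap, by simpa,
      .inl ⟨by simp, by simp⟩⟩
  · exact .inr ⟨_root_.mirror y, _root_.mirror x, p.swap, q.swap, by simpa, by simpa,
      .inr ⟨by simp, by simp⟩⟩
  · exact .inr ⟨_root_.mirror y, _root_.mirror x, p.swap, q.swap, by simpa, by simpa,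
      .inl ⟨by simp, by simp⟩⟩

def mirrorHom : pegGraph →g pegGraph := ⟨mirror, PegMove.mirror⟩

lemma exists_walk_mirror {c d : List Cell} (w : pegGraph.Walk c d) :
    ∃ w' : pegGraph.Walk (mirror c) (mirror d), w'.length = w.length :=
  ⟨w.map mirrorHom, Walk.length_map _ _⟩

def alt (p q : Cell) : ℕ → List Cell
  | 0 => []
  | k + 1 => p :: q :: alt p q k

lemma cons_alt (p q : Cell) (k : ℕ) : p :: alt q p k = alt p q k ++ [p] := by
  induction k with
  | zero => rfl
  | succ k ih => simp [alt, ih]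

lemma alt_succ_eq_append (p q : Cell) (k : ℕ) : alt p q (k + 1) = alt p q k ++ [p, q] := by
  rw [alt, cons_alt q p, ← cons_append, cons_alt, append_assoc]
  rfl

lemma mirror_alt (p q : Cell) (k : ℕ) : mirror (alt p q k) = alt q.swap p.swap k := by
  induction k with
  | zero => rfl
  | succ k ih =>
    rw [alt, mirror_cons, mirror_cons, ih, alt_succ_eq_append, append_assoc]
    rfl

lemma exists_walk_sweep {p q : Cell} (hp : p ≠ O) (hq : q ≠ O) (k : ℕ) (u v : List Cell) :
    ∃ w : pegGraph.Walk (u ++ O :: (alt q p k ++ v)) (u ++ alt p q k ++ O :: v),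
      w.length = k := by
  induction k generalizing u with
  | zero => exact ⟨Walk.nil.copy rfl (by simp [alt]), Walk.length_copy _ _ _⟩
  | succ k ih =>
    obtain ⟨w, hw⟩ := ih (u ++ [p, q])
    have jump : pegGraph.Adj (u ++ O :: (alt q p (k + 1) ++ v))
        (u ++ [p, q] ++ O :: (alt q p k ++ v)) := by
      simpa [alt] using pegGraph_adj_jump_left u (alt q p k ++ v) hp hq
    exact ⟨(w.cons jump).copy rfl (by simp [alt]), by simp [hw]⟩

lemma exists_walk_shrink (k m : ℕ) :
    ∃ w : pegGraph.Walk (replicate m R ++ O :: (alt R B k ++ replicate m B)) (finishCfg (k + m)),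
      w.length = (k + 1).choose 2 := by
  induction k generalizing m with
  | zero => exact ⟨Walk.nil.copy rfl (by simp [alt, finishCfg]), Walk.length_copy _ _ _⟩
  | succ k ih =>
    have step : pegGraph.Adj (replicate m R ++ O :: (alt R B (k + 1) ++ replicate m B))
        (replicate (m + 1) R ++ O :: (alt B R k ++ replicate (m + 1) B)) := by
      convert pegGraph_adj_step_left (replicate m R) (B :: alt R B k ++ replicate m B)
        (p := R) (by simp) using 1 <;>
        simp [alt, cons_alt, replicate_succ' (n := m) (a := R), replicate_succ]
    obtain ⟨sweep, hsweep⟩ := exists_walk_sweep (p := R) (q := B) (by simp) (by simp) k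
      (replicate (m + 1) R) (replicate (m + 1) B)
    obtain ⟨rest, hrest⟩ := ih (m + 1)
    obtain ⟨rest', hrest'⟩ := exists_walk_mirror rest
    have hstart : mirror (replicate (m + 1) R ++ O :: (alt R B k ++ replicate (m + 1) B)) =
        replicate (m + 1) R ++ alt R B k ++ O :: replicate (m + 1) B := by
      simp [mirror_alt, Cell.swap]
    have hend : mirror (finishCfg (k + (m + 1))) = finishCfg (k + 1 + m) := by
      rw [mirror_finishCfg, add_right_comm, add_assoc]
    refine ⟨.cons step (sweep.append (rest'.copy hstart hend)), ?_⟩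
    simp only [Walk.length_cons, Walk.length_append, Walk.length_copy, hsweep, hrest', hrest]
    simp [Nat.choose_succ_succ']
    omega

lemma exists_walk_grow (k m : ℕ) :
    ∃ w : pegGraph.Walk (replicate m B ++ O :: (alt R B k ++ replicate m R)) (finishCfg (k + m)),
      w.length + (k + 1).choose 2 = m + 2 * (k + m + 1).choose 2 := by
  induction m generalizing k with
  | zero =>
    obtain ⟨w, hw⟩ := exists_walk_shrink k 0
    exact ⟨w, by simp [hw]; omega⟩
  | succ m ih =>
    have step : pegGraph.Adj (replicate (m + 1) B ++ O :: (alt R B k ++ replicate (m + 1) R))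
        (replicate m B ++ O :: (alt B R (k + 1) ++ replicate m R)) := by
      convert pegGraph_adj_step_right (replicate m B) (alt R B k ++ replicate (m + 1) R)
        (p := B) (by simp) using 1 <;>
        simp [alt, cons_alt, replicate_succ' (n := m) (a := B), replicate_succ]
    obtain ⟨sweep, hsweep⟩ := exists_walk_sweep (p := R) (q := B) (by simp) (by simp) (k + 1)
      (replicate m B) (replicate m R)
    obtain ⟨rest, hrest⟩ := ih (k + 1)
    obtain ⟨rest', hrest'⟩ := exists_walk_mirror rest
    have hstart : mirror (replicate m B ++ O :: (alt R B (k + 1) ++ replicate m R)) =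
        replicate m B ++ alt R B (k + 1) ++ O :: replicate m R := by
      simp [mirror_alt, Cell.swap]
    have hend : mirror (finishCfg (k + 1 + m)) = finishCfg (k + (m + 1)) := by
      rw [mirror_finishCfg, add_right_comm, add_assoc]
    refine ⟨.cons step (sweep.append (rest'.copy hstart hend)), ?_⟩
    simp only [Walk.length_cons, Walk.length_append, Walk.length_copy, hsweep, hrest']
    rw [show k + (m + 1) + 1 = k + 1 + m + 1 by omega]
    simp [Nat.choose_succ_succ'] at hrest ⊢
    omega

theorem exists_isSolution (N : ℕ) :
    ∃ f : ℕ → List Cell, IsSolution N (N ^ 2 + 2 * N) f := by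
  obtain ⟨w, hw⟩ := exists_walk_grow 0 N
  have hlen : w.length = N ^ 2 + 2 * N := by
    have := Nat.add_one_mul_choose_eq N 1
    simp at hw this
    nlinarith
  refine ⟨w.getVert, w.getVert_zero.trans (by simp [startCfg, alt]), ?_, fun t ht => ?_⟩
  · rw [← hlen, w.getVert_length, zero_add]
  · exact w.adj_getVert_succ (hlen ▸ ht)

lemma List.count_take_swap {α : Type*} [BEq α] (a : α) (u v : List α) (p q : α)
    {n : ℕ} (hn : n ≠ u.length + 1) :
    ((u ++ p :: q :: v).take n).count a = ((u ++ q :: p :: v).take n).count a := by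
  rw [take_append, take_append]
  rcases h : n - u.length with _ | _ | r
  · rfl
  · omega
  · simp only [take_succ_cons, count_append, count_cons]
    omega

lemma List.getD_swap {α : Type*} (u v : List α) (p q d : α) {i : ℕ} (h₁ : i ≠ u.length)
    (h₂ : i ≠ u.length + 1) :
    (u ++ p :: q :: v).getD i d = (u ++ q :: p :: v).getD i d := by
  rcases lt_or_ge i u.length with hi | hi
  · rw [getD_append _ _ _ _ hi, getD_append _ _ _ _ hi]
  · rw [getD_append_right _ _ _ _ hi, getD_append_right _ _ _ _ hi]
    rcases h : i - u.length with _ | _ | r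
    · omega
    · omega
    · rfl

lemma List.notMem_of_count_append_eq_one {α : Type*} [BEq α] [LawfulBEq α] {a : α}
    {x l : List α} (h : (x ++ l).count a = 1) (hl : a ∈ l) : a ∉ x := by
  rw [count_append] at h
  have := count_pos_iff.2 hl
  rw [← count_eq_zero]
  omega

def crossing : Cell → Cell → ℤ
  | B, R => 1
  | R, B => -1
  | _, _ => 0

lemma abs_crossing_le (p q : Cell) : |crossing p q| ≤ 1 := by
  cases p <;> cases q <;> simp [crossing]

def inversions : List Cell → ℕ
  | [] => 0
  | a :: l => (if a = B then l.count R else 0) + inversions l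

lemma inversions_swap (u v : List Cell) (p q : Cell) :
    (inversions (u ++ p :: q :: v) : ℤ) = inversions (u ++ q :: p :: v) + crossing p q := by
  induction u with
  | nil => cases p <;> cases q <;> simp [inversions, crossing] <;> ring
  | cons a u ih =>
    have hcount := ((Perm.swap q p v).append_left u).count_eq R
    simp only [cons_append, inversions, hcount]
    push_cast
    linarith

lemma inversions_replicate (n : ℕ) (a : Cell) : inversions (replicate n a) = 0 := by
  induction n with
  | zero => rfl
  | succ n ih => cases a <;> simp [replicate_succ, inversions, ih, count_replicate]

lemma inversions_replicate_B_append (n : ℕ) (l : List Cell) :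
    inversions (replicate n B ++ l) = n * l.count R + inversions l := by
  induction n with
  | zero => simp
  | succ n ih => simp [replicate_succ, inversions, ih, count_replicate]; ring

lemma inversions_replicate_R_append (n : ℕ) (l : List Cell) :
    inversions (replicate n R ++ l) = inversions l := by
  induction n with
  | zero => simp
  | succ n ih => simp [replicate_succ, inversions, ih]

def middleCrossing (N : ℕ) (w : List Cell) (k : ℕ) : ℤ :=
  if Even (k + N) then 0 else crossing (w.getD (N - 1) O) (w.getD N O)

def potential (N : ℕ) (w : List Cell) (k : ℕ) : ℤ :=
  inversions w + 2 * (w.take N).count B - middleCrossing N w k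

lemma abs_potential_succ_sub_le (N : ℕ) (w : List Cell) (k : ℕ) :
    |potential N w (k + 1) - potential N w k| ≤ 1 := by
  rcases Nat.even_or_odd (k + N) with h | h
  · have h' : ¬Even (k + 1 + N) := by grind
    simpa [potential, middleCrossing, h, h'] using abs_crossing_le _ _
  · have h' : Even (k + 1 + N) := by grind
    simpa [potential, middleCrossing, h', Nat.not_even_iff_odd.2 h] using abs_crossing_le _ _

lemma middleCrossing_swap (N : ℕ) (u v : List Cell) (p q : Cell) (hN : N ≠ u.length + 1) :
    middleCrossing N (u ++ p :: q :: v) (u.length + 2) =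
      middleCrossing N (u ++ q :: p :: v) u.length := by
  by_cases h : Even (u.length + N)
  · have h' : Even (u.length + 2 + N) := by grind
    simp [middleCrossing, h, h']
  · have h' : ¬Even (u.length + 2 + N) := by grind
    have hN₁ : N - 1 ≠ u.length ∧ N - 1 ≠ u.length + 1 := by grind
    have hN₂ : N ≠ u.length ∧ N ≠ u.length + 1 := by grind
    simp only [middleCrossing, h, h', if_false, getD_swap u v p q O hN₁.1 hN₁.2,
      getD_swap u v p q O hN₂.1 hN₂.2]

lemma abs_potential_swap_sub_le (N : ℕ) (u v : List Cell) {p q : Cell} (hp : p ≠ O)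
    (hq : q ≠ O) :
    |potential N (u ++ p :: q :: v) (u.length + 2) - potential N (u ++ q :: p :: v) u.length|
      ≤ 1 := by
  have hinv := inversions_swap u v p q
  by_cases hN : N = u.length + 1
  · subst hN
    have hodd : ¬Even (u.length + (u.length + 1)) := by grind
    have hodd' : ¬Even (u.length + 2 + (u.length + 1)) := by grind
    simp only [potential, middleCrossing, hodd, hodd', if_false, hinv]
    cases p <;> cases q <;> simp_all [take_append, crossing] <;> ring_nf <;> simp
  · simp only [potential, hinv, count_take_swap B u v p q hN, middleCrossing_swap N u v p q hN]
    simpa using abs_crossing_le p q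

def configPotential (N : ℕ) (c : List Cell) : ℤ := potential N (c.erase O) (c.idxOf O)

lemma abs_configPotential_step_sub_le (N : ℕ) (x y : List Cell) {p : Cell} (hp : p ≠ O)
    (hx : O ∉ x) :
    |configPotential N (x ++ p :: O :: y) - configPotential N (x ++ O :: p :: y)| ≤ 1 := by
  simpa [configPotential, erase_append_right _ hx, idxOf_append_of_notMem hx, erase_cons,
    idxOf_cons, hp, add_assoc] using abs_potential_succ_sub_le N (x ++ p :: y) x.length

lemma abs_configPotential_jump_sub_le (N : ℕ) (x y : List Cell) {p q : Cell} (hp : p ≠ O)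
    (hq : q ≠ O) (hx : O ∉ x) :
    |configPotential N (x ++ p :: q :: O :: y) - configPotential N (x ++ O :: q :: p :: y)|
      ≤ 1 := by
  simpa [configPotential, erase_append_right _ hx, idxOf_append_of_notMem hx, erase_cons,
    idxOf_cons, hp, hq, add_assoc] using abs_potential_swap_sub_le N x y hp hq

lemma PegMove.abs_configPotential_sub_le (N : ℕ) {c d : List Cell} (hc : c.count O = 1)
    (h : PegMove c d) : |configPotential N c - configPotential N d| ≤ 1 := by
  rcases h with ⟨x, y, p, hp, ⟨rfl, rfl⟩ | ⟨rfl, rfl⟩⟩ |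
      ⟨x, y, p, q, hp, hq, ⟨rfl, rfl⟩ | ⟨rfl, rfl⟩⟩ <;>
    have hx : O ∉ x := notMem_of_count_append_eq_one hc (by simp)
  · exact abs_configPotential_step_sub_le N x y hp hx
  · exact abs_sub_comm (α := ℤ) _ _ ▸ abs_configPotential_step_sub_le N x y hp hx
  · exact abs_configPotential_jump_sub_le N x y hp hq hx
  · exact abs_sub_comm (α := ℤ) _ _ ▸ abs_configPotential_jump_sub_le N x y hp hq hx

lemma configPotential_startCfg (N : ℕ) :
    configPotential N (startCfg N) = N ^ 2 + 2 * N := by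
  have hO : O ∉ replicate N B := by simp
  simp [configPotential, startCfg, potential, middleCrossing, erase_append_right _ hO,
    idxOf_append_of_notMem hO, inversions_replicate_B_append, inversions_replicate, sq]

lemma configPotential_finishCfg (N : ℕ) : configPotential N (finishCfg N) = 0 := by
  have hO : O ∉ replicate N R := by simp
  simp [configPotential, finishCfg, potential, middleCrossing, erase_append_right _ hO,
    idxOf_append_of_notMem hO, inversions_replicate_R_append, inversions_replicate,
    count_replicate]

lemma sub_le_of_abs_sub_succ_le_one {g : ℕ → ℤ} {L : ℕ}
    (h : ∀ t < L, |g t - g (t + 1)| ≤ 1) : g 0 - g L ≤ L := by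
  calc g 0 - g L = ∑ t ∈ Finset.range L, (g t - g (t + 1)) := (Finset.sum_range_sub' g L).symm
    _ ≤ ∑ _t ∈ Finset.range L, 1 :=
      Finset.sum_le_sum fun t ht => (le_abs_self _).trans (h t (Finset.mem_range.1 ht))
    _ = L := by simp

theorem IsSolution.sq_add_two_mul_le {N L : ℕ} {f : ℕ → List Cell} (hf : IsSolution N L f) :
    N ^ 2 + 2 * N ≤ L := by
  obtain ⟨h0, hL, hmove⟩ := hf
  have hO : ∀ t ≤ L, (f t).count O = 1 := by
    intro t ht
    induction t with
    | zero => simp [h0, startCfg, count_replicate]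
    | succ t ih => rw [(hmove t ht).count_eq, ih (by omega)]
  have := sub_le_of_abs_sub_succ_le_one (g := fun t => configPotential N (f t))
    fun t ht => (hmove t ht).abs_configPotential_sub_le N (hO t ht.le)
  rw [h0, hL, configPotential_startCfg, configPotential_finishCfg, sub_zero] at this
  exact_mod_cast this

theorem min_moves_general (N : ℕ) :
    (∃ f : ℕ → List Cell, IsSolution N (N ^ 2 + 2 * N) f) ∧
    (∀ (L : ℕ) (f : ℕ → List Cell), IsSolution N L f → N ^ 2 + 2 * N ≤ L) :=
  ⟨exists_isSolution N, fun _ _ => IsSolution.sq_add_two_mul_le⟩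

/-- There exists a solution of the `N`-peg puzzle using exactly `N² + 2N`
moves, and no solution uses fewer; hence the minimum number of moves needed
is exactly `N² + 2N`. -/
theorem min_moves (N : ℕ) (hN : 1 ≤ N) :
    (∃ f : ℕ → List Cell, IsSolution N (N ^ 2 + 2 * N) f) ∧
    (∀ (L : ℕ) (f : ℕ → List Cell), IsSolution N L f → N ^ 2 + 2 * N ≤ L) :=
  min_moves_general N
end

section
/- For N = 2n−1, the move sequence (∏_{k=1}^{n-1} S j^{2k-1} s J^{2k}) S j^{2n-1} S (∏_{k=1}^{n-1} J^{2n-2k} s j^{2n-2k-1} S) is a valid solution of the peg puzzle consisting of exactly N² + 2N moves. -/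
open Cell

/-- The four kinds of moves appearing in the explicit solution:
`S` = blue peg steps right, `s` = red peg steps left,
`J` = blue peg jumps right, `j` = red peg jumps left. -/
inductive Letter
  | S : Letter
  | s : Letter
  | J : Letter
  | j : Letter
  deriving DecidableEq

/-- `MoveRel l c d` : performing move `l` transforms configuration `c` into `d`.
Jumps are over a single adjacent peg into the empty hole. -/
def MoveRel : Letter → List Cell → List Cell → Prop
  | .S, c, d => ∃ x y, c = x ++ B :: O :: y ∧ d = x ++ O :: B :: y
  | .s, c, d => ∃ x y, c = x ++ O :: R :: y ∧ d = x ++ R :: O :: y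
  | .J, c, d => ∃ x y p, p ≠ O ∧ c = x ++ B :: p :: O :: y ∧ d = x ++ O :: p :: B :: y
  | .j, c, d => ∃ x y p, p ≠ O ∧ c = x ++ O :: p :: R :: y ∧ d = x ++ R :: p :: O :: y

/-- `Plays w c d` : the sequence of moves `w`, each legal from the current
configuration, transforms `c` into `d`. -/
def Plays : List Letter → List Cell → List Cell → Prop
  | [], c, d => c = d
  | l :: ls, c, d => ∃ e, MoveRel l c e ∧ Plays ls e d

/-- The explicit solution sequence for `N = 2n - 1`:
`(∏_{k=1}^{n-1} S j^{2k-1} s J^{2k}) S j^{2n-1} S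
 (∏_{k=1}^{n-1} J^{2n-2k} s j^{2n-2k-1} S)`. -/
def seqOdd (n : ℕ) : List Letter :=
  (((List.range (n - 1)).map (fun k =>
      Letter.S :: (List.replicate (2 * (k + 1) - 1) Letter.j ++
        Letter.s :: List.replicate (2 * (k + 1)) Letter.J))).flatten) ++
  (Letter.S :: (List.replicate (2 * n - 1) Letter.j ++ [Letter.S])) ++
  (((List.range (n - 1)).map (fun k =>
      List.replicate (2 * n - 2 * (k + 1)) Letter.J ++
        Letter.s :: (List.replicate (2 * n - 2 * (k + 1) - 1) Letter.j ++
          [Letter.S]))).flatten)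

open Cell List

def alternating {α : Type*} (a b : α) : ℕ → List α
  | 0 => []
  | t + 1 => a :: b :: alternating a b t

theorem alternating_succ' {α : Type*} (a b : α) (t : ℕ) :
    alternating a b (t + 1) = alternating a b t ++ [a, b] := by
  induction t with
  | zero => rfl
  | succ t ih => exact congrArg (a :: b :: ·) ih

theorem cons_alternating_append {α : Type*} (a b : α) (t : ℕ) (l : List α) :
    a :: (alternating b a t ++ l) = alternating a b t ++ a :: l := by
  induction t with
  | zero => rfl
  | succ t ih => exact congrArg (a :: b :: ·) ih

theorem MoveRel.frame {l : Letter} {c d : List Cell} (h : MoveRel l c d) (x y : List Cell) :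
    MoveRel l (x ++ c ++ y) (x ++ d ++ y) := by
  cases l <;> simp only [MoveRel] at h ⊢
  · obtain ⟨u, v, rfl, rfl⟩ := h
    exact ⟨x ++ u, v ++ y, by simp, by simp⟩
  · obtain ⟨u, v, rfl, rfl⟩ := h
    exact ⟨x ++ u, v ++ y, by simp, by simp⟩
  · obtain ⟨u, v, p, hp, rfl, rfl⟩ := h
    exact ⟨x ++ u, v ++ y, p, hp, by simp, by simp⟩
  · obtain ⟨u, v, p, hp, rfl, rfl⟩ := h
    exact ⟨x ++ u, v ++ y, p, hp, by simp, by simp⟩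

theorem Plays.frame {w : List Letter} {c d : List Cell} (h : Plays w c d) (x y : List Cell) :
    Plays w (x ++ c ++ y) (x ++ d ++ y) := by
  induction w generalizing c with
  | nil => exact congrArg (x ++ · ++ y) h
  | cons l w ih =>
    obtain ⟨e, hl, hw⟩ := h
    exact ⟨_, hl.frame x y, ih hw⟩

theorem Plays.append {u v : List Letter} {c d e : List Cell} (h₁ : Plays u c d)
    (h₂ : Plays v d e) : Plays (u ++ v) c e := by
  induction u generalizing c with
  | nil => exact (h₁ : c = d) ▸ h₂
  | cons l u ih =>
    obtain ⟨f, hl, hu⟩ := h₁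
    exact ⟨f, hl, ih hu⟩

theorem Plays.congr {w : List Letter} {c c' d d' : List Cell} (h : Plays w c d) (hc : c = c')
    (hd : d = d') : Plays w c' d' :=
  hc ▸ hd ▸ h

theorem Plays.flatten_map_range (f : ℕ → List Letter) (g : ℕ → List Cell) (t : ℕ)
    (h : ∀ k < t, Plays (f k) (g k) (g (k + 1))) :
    Plays ((range t).map f).flatten (g 0) (g t) := by
  induction t with
  | zero => rfl
  | succ t ih =>
    rw [range_succ, map_append, flatten_append]
    simpa using (ih fun k hk => h k (by omega)).append (h t (by omega))

theorem plays_S : Plays [.S] [B, O] [O, B] := ⟨_, ⟨[], [], rfl, rfl⟩, rfl⟩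

theorem plays_s : Plays [.s] [O, R] [R, O] := ⟨_, ⟨[], [], rfl, rfl⟩, rfl⟩

theorem plays_J {p : Cell} (hp : p ≠ O) : Plays [.J] [B, p, O] [O, p, B] :=
  ⟨_, ⟨[], [], p, hp, rfl, rfl⟩, rfl⟩

theorem plays_j {p : Cell} (hp : p ≠ O) : Plays [.j] [O, p, R] [R, p, O] :=
  ⟨_, ⟨[], [], p, hp, rfl, rfl⟩, rfl⟩

theorem plays_replicate_j (t : ℕ) :
    Plays (replicate t .j) (O :: alternating B R t) (alternating R B t ++ [O]) := by
  induction t with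
  | zero => rfl
  | succ t ih =>
    exact ((plays_j (p := B) (by decide)).frame [] (alternating B R t)).append
      ((ih.frame [R, B] []).congr (by simp) (by simp [alternating]))

theorem plays_replicate_J (t : ℕ) :
    Plays (replicate t .J) (alternating B R t ++ [O]) (O :: alternating R B t) := by
  induction t with
  | zero => rfl
  | succ t ih =>
    have jump : Plays [.J] (alternating B R (t + 1) ++ [O]) (alternating B R t ++ [O, R, B]) :=
      ((plays_J (p := R) (by decide)).frame (alternating B R t) []).congr
        (by simp [alternating_succ']) (by simp)
    exact jump.append ((ih.frame [] [R, B]).congr (by simp) (by simp [alternating_succ']))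

def growWord (t : ℕ) : List Letter := .S :: (replicate (t + 1) .j ++ .s :: replicate (t + 2) .J)

def middleWord (t : ℕ) : List Letter := .S :: (replicate (t + 1) .j ++ [.S])

def shrinkWord (t : ℕ) : List Letter :=
  replicate (t + 2) .J ++ .s :: (replicate (t + 1) .j ++ [.S])

def leftHoleCfg (m t : ℕ) : List Cell := replicate m B ++ O :: alternating R B t ++ replicate m R

def rightHoleCfg (m t : ℕ) : List Cell := replicate m R ++ alternating B R t ++ O :: replicate m B

theorem plays_growWord (t : ℕ) :
    Plays (growWord t) (B :: B :: O :: alternating R B t ++ [R, R])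
      (O :: alternating R B (t + 2)) := by
  have step : Plays [.S] (B :: B :: O :: alternating R B t ++ [R, R])
      (B :: O :: alternating B R (t + 1) ++ [R]) :=
    (plays_S.frame [B] (alternating R B t ++ [R, R])).congr (by simp)
      (by simp [cons_alternating_append, alternating_succ'])
  have hop : Plays (replicate (t + 1) .j) (B :: O :: alternating B R (t + 1) ++ [R])
      (B :: alternating R B (t + 1) ++ [O, R]) :=
    ((plays_replicate_j (t + 1)).frame [B] [R]).congr (by simp) (by simp)
  have step' : Plays [.s] (B :: alternating R B (t + 1) ++ [O, R])
      (alternating B R (t + 2) ++ [O]) :=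
    (plays_s.frame (B :: alternating R B (t + 1)) []).congr (by simp)
      (by simp [cons_alternating_append, alternating_succ'])
  exact step.append (hop.append (step'.append (plays_replicate_J (t + 2))))

theorem plays_middleWord (t : ℕ) :
    Plays (middleWord t) (B :: O :: alternating R B t ++ [R])
      (R :: alternating B R t ++ [O, B]) := by
  have step : Plays [.S] (B :: O :: alternating R B t ++ [R]) (O :: alternating B R (t + 1)) :=
    (plays_S.frame [] (alternating R B t ++ [R])).congr (by simp)
      (by simp [cons_alternating_append, alternating_succ'])
  have step' : Plays [.S] (alternating R B (t + 1) ++ [O]) (R :: alternating B R t ++ [O, B]) :=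
    (plays_S.frame (alternating R B t ++ [R]) []).congr (by simp [alternating_succ'])
      (by simp [cons_alternating_append])
  exact step.append ((plays_replicate_j (t + 1)).append step')

theorem plays_shrinkWord (t : ℕ) :
    Plays (shrinkWord t) (alternating B R (t + 2) ++ [O])
      (R :: R :: alternating B R t ++ [O, B, B]) := by
  have step : Plays [.s] (O :: alternating R B (t + 2))
      (R :: O :: alternating B R (t + 1) ++ [B]) :=
    (plays_s.frame [] (B :: alternating R B (t + 1))).congr rfl
      (by simp [← cons_alternating_append])
  have hop : Plays (replicate (t + 1) .j) (R :: O :: alternating B R (t + 1) ++ [B])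
      (R :: alternating R B (t + 1) ++ [O, B]) :=
    ((plays_replicate_j (t + 1)).frame [R] [B]).congr (by simp) (by simp)
  have step' : Plays [.S] (R :: alternating R B (t + 1) ++ [O, B])
      (R :: R :: alternating B R t ++ [O, B, B]) :=
    (plays_S.frame (R :: alternating R B t ++ [R]) [B]).congr (by simp [alternating_succ'])
      (by simp [cons_alternating_append])
  exact (plays_replicate_J (t + 2)).append (step.append (hop.append step'))

theorem plays_growWord_leftHoleCfg (m t : ℕ) :
    Plays (growWord t) (leftHoleCfg (m + 2) t) (leftHoleCfg m (t + 2)) :=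
  ((plays_growWord t).frame (replicate m B) (replicate m R)).congr
    (by simp [leftHoleCfg, replicate_succ (a := R), replicate_succ' (a := B)])
    (by simp [leftHoleCfg])

theorem plays_middleWord_leftHoleCfg (t : ℕ) :
    Plays (middleWord t) (leftHoleCfg 1 t) (rightHoleCfg 1 t) :=
  (plays_middleWord t).congr (by simp [leftHoleCfg]) (by simp [rightHoleCfg])

theorem plays_shrinkWord_rightHoleCfg (m t : ℕ) :
    Plays (shrinkWord t) (rightHoleCfg m (t + 2)) (rightHoleCfg (m + 2) t) :=
  ((plays_shrinkWord t).frame (replicate m R) (replicate m B)).congr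
    (by simp [rightHoleCfg])
    (by simp [rightHoleCfg, replicate_succ (a := B), replicate_succ' (a := R)])

theorem seqOdd_succ (m : ℕ) :
    seqOdd (m + 1) = ((range m).map fun k => growWord (2 * k)).flatten ++ middleWord (2 * m) ++
      ((range m).map fun k => shrinkWord (2 * (m - 1 - k))).flatten := by
  simp only [seqOdd, Nat.add_sub_cancel]
  -- the first product already matches, since `2 * (k + 1) - 1` reduces to `2 * k + 1`
  congr 2
  refine map_congr_left fun k hk => ?_
  have hk : k < m := mem_range.mp hk
  simp only [shrinkWord, show 2 * (m + 1) - 2 * (k + 1) = 2 * (m - 1 - k) + 2 by omega,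
    show 2 * (m - 1 - k) + 2 - 1 = 2 * (m - 1 - k) + 1 by omega]

theorem length_seqOdd_succ (m : ℕ) : (seqOdd (m + 1)).length = (2 * m + 1) * (2 * m + 3) := by
  have pair : ∀ k ∈ range m,
      (growWord (2 * k)).length + (shrinkWord (2 * (m - 1 - k))).length = 4 * m + 6 := by
    intro k hk
    have := mem_range.mp hk
    simp only [growWord, shrinkWord, length_cons, length_append, length_replicate,
      length_nil]
    omega
  rw [seqOdd_succ, length_append, length_append, length_flatten, length_flatten, map_map,
    map_map, add_right_comm, ← sum_map_add]
  simp [map_congr_left pair, middleWord]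
  ring

/-- For `N = 2n - 1`, the sequence
`(∏_{k=1}^{n-1} S j^{2k-1} s J^{2k}) S j^{2n-1} S
 (∏_{k=1}^{n-1} J^{2n-2k} s j^{2n-2k-1} S)`
is a valid solution of the peg puzzle (every move is legal and it transforms
`BᴺORᴺ` into `RᴺOBᴺ`) consisting of exactly `N² + 2N` moves. -/
theorem odd_solution (n : ℕ) (hn : 1 ≤ n) :
    (seqOdd n).length = (2 * n - 1) ^ 2 + 2 * (2 * n - 1) ∧
    Plays (seqOdd n) (startCfg (2 * n - 1)) (finishCfg (2 * n - 1)) := by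
  obtain ⟨m, rfl⟩ : ∃ m, n = m + 1 := ⟨n - 1, by omega⟩
  rw [show 2 * (m + 1) - 1 = 2 * m + 1 by omega]
  refine ⟨by rw [length_seqOdd_succ]; ring, ?_⟩
  have grow := Plays.flatten_map_range (fun k => growWord (2 * k))
    (fun k => leftHoleCfg (2 * (m - k) + 1) (2 * k)) m fun k hk => by
      convert plays_growWord_leftHoleCfg (2 * (m - (k + 1)) + 1) (2 * k) using 2 <;> omega
  have shrink := Plays.flatten_map_range (fun k => shrinkWord (2 * (m - 1 - k)))
    (fun k => rightHoleCfg (2 * k + 1) (2 * (m - k))) m fun k hk => by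
      convert plays_shrinkWord_rightHoleCfg (2 * k + 1) (2 * (m - 1 - k)) using 2 <;> omega
  have middle : Plays (middleWord (2 * m)) (leftHoleCfg (2 * (m - m) + 1) (2 * m))
      (rightHoleCfg (2 * 0 + 1) (2 * (m - 0))) := by
    simpa using plays_middleWord_leftHoleCfg (2 * m)
  rw [seqOdd_succ]
  exact ((grow.append middle).append shrink).congr
    (by simp [leftHoleCfg, startCfg, alternating]) (by simp [rightHoleCfg, finishCfg, alternating])
end

section
/- For any red–blue pair of pegs in any solution, the total weight contribution of all their crossings other than the first is zero: after the first crossing, the remaining crossings of the pair come in equal numbers of +2 and −2 weight-change jumps. -/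
open scoped Classical

/-- A peg of the puzzle: `Sum.inl i` is the `i`-th blue peg, `Sum.inr i` is
the `i`-th red peg. -/
abbrev Peg (N : ℕ) := Fin N ⊕ Fin N

/-- A solution of the `N`-peg puzzle using `L` moves, recorded by the
position (a hole, numbered `1,…,2N+1`) of each peg at each time `0,…,L`.
Initially the blue pegs occupy holes `1,…,N` and the red pegs holes
`N+2,…,2N+1`; at the end the red pegs occupy the leftmost `N` holes and the
blue pegs the rightmost `N` holes.  On each move exactly one peg moves, by
`±1` into the adjacent empty hole (a step), or by `±2` over one adjacent peg
into the empty hole (a jump). -/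
structure PegSolution (N L : ℕ) where
  pos : ℕ → Peg N → ℤ
  mem_range : ∀ t ≤ L, ∀ p, 1 ≤ pos t p ∧ pos t p ≤ 2 * N + 1
  inj : ∀ t ≤ L, ∀ p q, pos t p = pos t q → p = q
  init_blue : ∀ i : Fin N, pos 0 (Sum.inl i) = (i : ℤ) + 1
  init_red : ∀ i : Fin N, pos 0 (Sum.inr i) = (N : ℤ) + 2 + (i : ℤ)
  final_blue : ∀ i : Fin N, (N : ℤ) + 2 ≤ pos L (Sum.inl i)
  final_red : ∀ i : Fin N, pos L (Sum.inr i) ≤ (N : ℤ)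
  move : ∀ t < L, ∃ mover : Peg N,
    (∀ q, q ≠ mover → pos (t + 1) q = pos t q) ∧
    ((pos (t + 1) mover - pos t mover = 1 ∨ pos (t + 1) mover - pos t mover = -1) ∨
     ((pos (t + 1) mover - pos t mover = 2 ∨ pos (t + 1) mover - pos t mover = -2) ∧
      ∃ mid : Peg N, mid ≠ mover ∧ 2 * pos t mid = pos t mover + pos (t + 1) mover))

/-- The pair consisting of the blue peg `i` and the red peg `j` crosses on
move `t` (one jumps over the other): their relative order changes between
times `t` and `t + 1`. -/
def CrossesAt {N L : ℕ} (s : PegSolution N L) (i j : Fin N) (t : ℕ) : Prop :=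
  (s.pos t (Sum.inl i) - s.pos t (Sum.inr j)) *
    (s.pos (t + 1) (Sum.inl i) - s.pos (t + 1) (Sum.inr j)) < 0

/-- The weight of the position at time `t`: total distance moved right by the
blue pegs plus total distance moved left by the red pegs. -/
def weight {N L : ℕ} (s : PegSolution N L) (t : ℕ) : ℤ :=
  (∑ i : Fin N, (s.pos t (Sum.inl i) - s.pos 0 (Sum.inl i))) +
  ∑ i : Fin N, (s.pos 0 (Sum.inr i) - s.pos t (Sum.inr i))

/-- Move `t` is a first cross: some red–blue pair crosses on move `t` for the
first time. -/
def IsFirstCross {N L : ℕ} (s : PegSolution N L) (t : ℕ) : Prop :=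
  ∃ i j : Fin N, CrossesAt s i j t ∧ ∀ u < t, ¬ CrossesAt s i j u

/-!
Let `g t` be the gap between the blue and the red peg at time `t` (blue position minus red
position); it never vanishes, is negative at the start and positive at the end. A move on which
the pair does not cross keeps the sign of `g`. On a crossing move one of the two pegs jumps over
the other, so the gap and the weight change by the same amount `δ` with `|δ| ≤ 2`, and since `g`
changes sign this forces `δ = sign g (t + 1) - sign g t`. Summing over the crossings after the
first one therefore telescopes to `sign g L - sign g (m + 1) = 1 - 1`, where `m` is the first
crossing.
-/

open Finset

theorem Int.sub_eq_sign_sub_sign_of_mul_neg {a b : ℤ} (hab : a * b < 0) (h : |b - a| ≤ 2) :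
    b - a = b.sign - a.sign := by
  rw [abs_le] at h
  rcases mul_neg_iff.mp hab with ⟨ha, hb⟩ | ⟨ha, hb⟩
  · rw [Int.sign_eq_one_of_pos ha, Int.sign_eq_neg_one_of_neg hb]; omega
  · rw [Int.sign_eq_neg_one_of_neg ha, Int.sign_eq_one_of_pos hb]; omega

theorem Int.sign_eq_sign_of_not_mul_neg {a b : ℤ} (ha : a ≠ 0) (hb : b ≠ 0) (hab : ¬ a * b < 0) :
    b.sign = a.sign := by
  rcases ha.lt_or_gt with ha | ha <;> rcases hb.lt_or_gt with hb | hb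
  · rw [Int.sign_eq_neg_one_of_neg ha, Int.sign_eq_neg_one_of_neg hb]
  · exact absurd (mul_neg_of_neg_of_pos ha hb) hab
  · exact absurd (mul_neg_of_pos_of_neg ha hb) hab
  · rw [Int.sign_eq_one_of_pos ha, Int.sign_eq_one_of_pos hb]

theorem Finset.erase_min'_filter_range {P : ℕ → Prop} [DecidablePred P] {L : ℕ}
    (h : ((range L).filter P).Nonempty) :
    ((range L).filter P).erase (((range L).filter P).min' h) =
      (Ico (((range L).filter P).min' h + 1) L).filter P := by
  ext t
  simp only [mem_erase, mem_filter, mem_range, mem_Ico]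
  constructor
  · rintro ⟨hne, htL, hP⟩
    have hle := min'_le _ t (mem_filter.mpr ⟨mem_range.mpr htL, hP⟩)
    exact ⟨⟨by omega, htL⟩, hP⟩
  · rintro ⟨⟨hlt, htL⟩, hP⟩
    exact ⟨by omega, htL, hP⟩

theorem Finset.filter_Ico_min'_filter_range {P : ℕ → Prop} [DecidablePred P] {L : ℕ}
    (h : ((range L).filter P).Nonempty) :
    (Ico 0 (((range L).filter P).min' h)).filter P = ∅ := by
  refine filter_eq_empty_iff.mpr fun t ht hP => ?_
  have htm := (mem_Ico.mp ht).2
  have hmL := mem_range.mp (mem_filter.mp (min'_mem _ h)).1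
  have hle := min'_le _ t (mem_filter.mpr ⟨mem_range.mpr (htm.trans hmL), hP⟩)
  omega

namespace PegSolution

variable {N L : ℕ} (s : PegSolution N L)

def gap (i j : Fin N) (t : ℕ) : ℤ :=
  s.pos t (Sum.inl i) - s.pos t (Sum.inr j)

theorem crossesAt_iff {i j : Fin N} {t : ℕ} :
    CrossesAt s i j t ↔ s.gap i j t * s.gap i j (t + 1) < 0 :=
  Iff.rfl

theorem gap_ne_zero (i j : Fin N) {t : ℕ} (ht : t ≤ L) : s.gap i j t ≠ 0 :=
  fun h => Sum.inl_ne_inr (s.inj t ht _ _ (sub_eq_zero.mp h))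

theorem gap_zero_neg (i j : Fin N) : s.gap i j 0 < 0 := by
  have := s.init_blue i
  have := s.init_red j
  have := i.isLt
  simp only [gap]
  omega

theorem gap_final_pos (i j : Fin N) : 0 < s.gap i j L := by
  have := s.final_blue i
  have := s.final_red j
  simp only [gap]
  omega

theorem weight_succ_sub_of_forall_ne {t : ℕ} (p : Peg N)
    (hfix : ∀ q, q ≠ p → s.pos (t + 1) q = s.pos t q) :
    weight s (t + 1) - weight s t =
      Sum.elim (fun _ => 1) (fun _ => -1) p * (s.pos (t + 1) p - s.pos t p) := by
  have hsum : weight s (t + 1) - weight s t =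
      ∑ q : Peg N, Sum.elim (fun _ => 1) (fun _ => -1) q * (s.pos (t + 1) q - s.pos t q) := by
    simp only [weight, Fintype.sum_sum_type, Sum.elim_inl, Sum.elim_inr, one_mul, neg_one_mul,
      ← sum_sub_distrib, ← sum_add_distrib]
    exact sum_congr rfl fun _ _ => by ring
  rw [hsum, sum_eq_single p (fun q _ hq => by rw [hfix q hq, sub_self, mul_zero])
    (by simp)]

theorem abs_pos_succ_sub_pos_le_two {t : ℕ} (ht : t < L) (p : Peg N) :
    |s.pos (t + 1) p - s.pos t p| ≤ 2 := by
  obtain ⟨mover, hfix, hstep⟩ := s.move t ht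
  by_cases hp : p = mover
  · subst hp
    rcases hstep with (h | h) | ⟨h | h, -⟩ <;> rw [h] <;> norm_num
  · rw [hfix p hp, sub_self, abs_zero]
    norm_num

theorem mover_eq_of_crossesAt {i j : Fin N} {t : ℕ} (hc : CrossesAt s i j t) {p : Peg N}
    (hfix : ∀ q, q ≠ p → s.pos (t + 1) q = s.pos t q) :
    p = Sum.inl i ∨ p = Sum.inr j := by
  by_contra! hp
  have hgap : s.gap i j (t + 1) = s.gap i j t := by
    simp only [gap, hfix _ hp.1.symm, hfix _ hp.2.symm]
  rw [crossesAt_iff, hgap] at hc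
  exact (mul_self_nonneg _).not_gt hc

theorem abs_gap_succ_sub_le_two (i j : Fin N) {t : ℕ} (ht : t < L) :
    |s.gap i j (t + 1) - s.gap i j t| ≤ 2 := by
  obtain ⟨p, hfix, -⟩ := s.move t ht
  have hi := abs_le.mp (s.abs_pos_succ_sub_pos_le_two ht (Sum.inl i))
  have hj := abs_le.mp (s.abs_pos_succ_sub_pos_le_two ht (Sum.inr j))
  have hone : s.pos (t + 1) (Sum.inl i) = s.pos t (Sum.inl i) ∨
      s.pos (t + 1) (Sum.inr j) = s.pos t (Sum.inr j) := by
    by_cases hp : Sum.inl i = p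
    · exact .inr (hfix _ (hp ▸ Sum.inr_ne_inl))
    · exact .inl (hfix _ hp)
  simp only [gap, abs_le]
  omega

theorem weight_succ_sub_eq_gap_succ_sub_of_crossesAt {i j : Fin N} {t : ℕ} (ht : t < L)
    (hc : CrossesAt s i j t) :
    weight s (t + 1) - weight s t = s.gap i j (t + 1) - s.gap i j t := by
  obtain ⟨p, hfix, -⟩ := s.move t ht
  rw [s.weight_succ_sub_of_forall_ne p hfix]
  rcases s.mover_eq_of_crossesAt hc hfix with rfl | rfl
  · simp only [gap, hfix (Sum.inr j) Sum.inr_ne_inl, Sum.elim_inl, one_mul]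
    ring
  · simp only [gap, hfix (Sum.inl i) Sum.inl_ne_inr, Sum.elim_inr, neg_one_mul]
    ring

theorem weight_succ_sub_of_crossesAt {i j : Fin N} {t : ℕ} (ht : t < L)
    (hc : CrossesAt s i j t) :
    weight s (t + 1) - weight s t = (s.gap i j (t + 1)).sign - (s.gap i j t).sign := by
  rw [s.weight_succ_sub_eq_gap_succ_sub_of_crossesAt ht hc]
  exact Int.sub_eq_sign_sub_sign_of_mul_neg hc (s.abs_gap_succ_sub_le_two i j ht)

theorem sign_gap_succ_of_not_crossesAt {i j : Fin N} {t : ℕ} (ht : t < L)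
    (hc : ¬ CrossesAt s i j t) : (s.gap i j (t + 1)).sign = (s.gap i j t).sign :=
  Int.sign_eq_sign_of_not_mul_neg (s.gap_ne_zero i j ht.le) (s.gap_ne_zero i j ht) hc

theorem sum_weight_succ_sub_filter_crossesAt_Ico (i j : Fin N) {a b : ℕ} (hab : a ≤ b)
    (hb : b ≤ L) :
    ∑ t ∈ (Ico a b).filter (fun t => CrossesAt s i j t), (weight s (t + 1) - weight s t) =
      (s.gap i j b).sign - (s.gap i j a).sign := by
  rw [sum_filter, ← sum_Ico_sub (fun t => (s.gap i j t).sign) hab]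
  refine sum_congr rfl fun t ht => ?_
  have htL : t < L := (mem_Ico.mp ht).2.trans_le hb
  split_ifs with hc
  · exact s.weight_succ_sub_of_crossesAt htL hc
  · rw [s.sign_gap_succ_of_not_crossesAt htL hc, sub_self]

end PegSolution

/-- For any red–blue pair of pegs in any solution, the total weight
contribution of all their crossings other than the first is zero: after the
first crossing, the remaining crossings come in equal numbers of `+2` and
`-2` weight-change jumps, so their weight changes cancel. -/
theorem later_crossings_cancel (N L : ℕ) (s : PegSolution N L) (i j : Fin N)
    (h : ((Finset.range L).filter (fun t => CrossesAt s i j t)).Nonempty) :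
    (∑ t ∈ ((Finset.range L).filter (fun t => CrossesAt s i j t)).erase
        (((Finset.range L).filter (fun t => CrossesAt s i j t)).min' h),
      (weight s (t + 1) - weight s t)) = 0 := by
  set m := ((range L).filter (fun t => CrossesAt s i j t)).min' h
  obtain ⟨hmL, hm⟩ : m < L ∧ CrossesAt s i j m := by
    simpa using min'_mem _ h
  have hsign_m : (s.gap i j m).sign = -1 := by
    have := s.sum_weight_succ_sub_filter_crossesAt_Ico i j (Nat.zero_le m) hmL.le
    rw [filter_Ico_min'_filter_range h, sum_empty,
      Int.sign_eq_neg_one_of_neg (s.gap_zero_neg i j)] at this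
    omega
  have hsign_succ : (s.gap i j (m + 1)).sign = 1 :=
    Int.sign_eq_one_of_pos <| pos_of_mul_neg_right hm
      (Int.sign_eq_neg_one_iff_neg.mp hsign_m).le
  rw [erase_min'_filter_range h, s.sum_weight_succ_sub_filter_crossesAt_Ico i j hmL le_rfl,
    hsign_succ, Int.sign_eq_one_of_pos (s.gap_final_pos i j), sub_self]
end
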